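/- For any subset A of a topological space X, e*-cl_θ(A) equals the intersection of all e*-θ-closed sets containing A, and also equals the intersection of all e*-regular sets containing A. -/

import Mathlib

open Set Topology

variable {X : Type*} [TopologicalSpace X]

/-- δ-closure of A. -/
def deltaCl (A : Set X) : Set X :=
  {x | ∀ U : Set X, IsOpen U → x ∈ U → (interior (closure U) ∩ A).Nonempty}

/-- A is e*-open if A ⊆ cl(int(δ-cl A)). -/
def EStarOpen (A : Set X) : Prop := A ⊆ closure (interior (deltaCl A))

/-- A is e*-closed if its complement is e*-open. -/
def EStarClosed (A : Set X) : Prop := EStarOpen Aᶜ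

/-- e*-closure: intersection of all e*-closed supersets. -/
def eStarCl (A : Set X) : Set X := ⋂₀ {F | EStarClosed F ∧ A ⊆ F}

/-- e*-interior: union of all e*-open subsets. -/
def eStarInt (A : Set X) : Set X := ⋃₀ {U | EStarOpen U ∧ U ⊆ A}

/-- e*-regular: both e*-open and e*-closed. -/
def EStarRegular (A : Set X) : Prop := EStarOpen A ∧ EStarClosed A

/-- e*-θ-closure. -/
def eStarClTheta (A : Set X) : Set X :=
  {x | ∀ U : Set X, EStarOpen U → x ∈ U → (eStarCl U ∩ A).Nonempty}

/-- e*-θ-closed. -/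
def EStarThetaClosed (A : Set X) : Prop := A = eStarClTheta A

/-- e*-θ-open. -/
def EStarThetaOpen (A : Set X) : Prop := EStarThetaClosed Aᶜ

/-- quasi e*-θ-closed. -/
def QEStarThetaClosed (A : Set X) : Prop :=
  ∀ U : Set X, EStarThetaOpen U → A ⊆ U → eStarClTheta A ⊆ U

/-- e*-θ-kernel. -/
def eStarKerTheta (A : Set X) : Set X := ⋂₀ {U | EStarThetaOpen U ∧ A ⊆ U}


/-!
Every e*-regular set is e*-θ-closed, and e*-cl_θ is monotone, so
e*-cl_θ A ⊆ ⋂ {e*-θ-closed V ⊇ A} ⊆ ⋂ {e*-regular V ⊇ A}. Conversely, if x ∉ e*-cl_θ A there is an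
e*-open U ∋ x with e*-cl U ∩ A = ∅; the e*-closure of an e*-open set is e*-regular, so the
complement of e*-cl U is an e*-regular superset of A missing x.
-/

lemma deltaCl_mono {A B : Set X} (h : A ⊆ B) : deltaCl A ⊆ deltaCl B := fun _ hx U hU hxU =>
  (hx U hU hxU).mono (inter_subset_inter_right _ h)

lemma subset_deltaCl (A : Set X) : A ⊆ deltaCl A := fun x hx _ hU hxU =>
  ⟨x, interior_maximal subset_closure hU hxU, hx⟩

lemma IsOpen.eStarOpen {A : Set X} (h : IsOpen A) : EStarOpen A :=
  (interior_maximal (subset_deltaCl A) h).trans subset_closure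

lemma IsClosed.eStarClosed {A : Set X} (h : IsClosed A) : EStarClosed A :=
  h.isOpen_compl.eStarOpen

lemma eStarOpen_sUnion {S : Set (Set X)} (h : ∀ U ∈ S, EStarOpen U) : EStarOpen (⋃₀ S) := by
  rintro x ⟨U, hUS, hxU⟩
  exact closure_mono (interior_mono (deltaCl_mono (subset_sUnion_of_mem hUS))) (h U hUS hxU)

lemma subset_eStarCl (A : Set X) : A ⊆ eStarCl A := fun _ hx _ hF => hF.2 hx

lemma eStarCl_subset {A F : Set X} (hF : EStarClosed F) (hAF : A ⊆ F) : eStarCl A ⊆ F :=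
  sInter_subset_of_mem ⟨hF, hAF⟩

lemma eStarClosed_eStarCl (A : Set X) : EStarClosed (eStarCl A) := by
  rw [EStarClosed, eStarCl, compl_sInter]
  refine eStarOpen_sUnion ?_
  rintro _ ⟨F, ⟨hF, -⟩, rfl⟩
  exact hF

lemma EStarClosed.eStarCl_eq {A : Set X} (h : EStarClosed A) : eStarCl A = A :=
  (eStarCl_subset h subset_rfl).antisymm (subset_eStarCl A)

lemma eStarOpen_eStarCl {U : Set X} (h : EStarOpen U) : EStarOpen (eStarCl U) := by
  have hcl : eStarCl U ⊆ closure (interior (deltaCl U)) :=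
    eStarCl_subset isClosed_closure.eStarClosed h
  exact hcl.trans (closure_mono (interior_mono (deltaCl_mono (subset_eStarCl U))))

lemma eStarRegular_compl_eStarCl {U : Set X} (h : EStarOpen U) :
    EStarRegular (eStarCl U)ᶜ :=
  ⟨eStarClosed_eStarCl U, by rw [EStarClosed, compl_compl]; exact eStarOpen_eStarCl h⟩

lemma subset_eStarClTheta (A : Set X) : A ⊆ eStarClTheta A := fun x hx U _ hxU =>
  ⟨x, subset_eStarCl U hxU, hx⟩

lemma eStarClTheta_mono {A B : Set X} (h : A ⊆ B) : eStarClTheta A ⊆ eStarClTheta B :=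
  fun _ hx U hU hxU => (hx U hU hxU).mono (inter_subset_inter_right _ h)

lemma EStarThetaClosed.eStarClTheta_subset {A V : Set X} (hV : EStarThetaClosed V)
    (hAV : A ⊆ V) : eStarClTheta A ⊆ V :=
  hV ▸ eStarClTheta_mono hAV

lemma EStarRegular.eStarThetaClosed {V : Set X} (h : EStarRegular V) : EStarThetaClosed V := by
  refine (subset_eStarClTheta V).antisymm fun x hx => by_contra fun hxV => ?_
  have hcompl : EStarClosed Vᶜ := by rw [EStarClosed, compl_compl]; exact h.1
  obtain ⟨y, hyV', hyV⟩ := hx Vᶜ h.2 hxV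
  exact (hcompl.eStarCl_eq ▸ hyV') hyV

lemma exists_eStarRegular_of_notMem_eStarClTheta {A : Set X} {x : X} (hx : x ∉ eStarClTheta A) :
    ∃ V, EStarRegular V ∧ A ⊆ V ∧ x ∉ V := by
  simp only [eStarClTheta, mem_ofPred_eq, not_forall, not_nonempty_iff_eq_empty] at hx
  obtain ⟨U, hU, hxU, hdisj⟩ := hx
  exact ⟨(eStarCl U)ᶜ, eStarRegular_compl_eStarCl hU,
    fun a ha haU => (eq_empty_iff_forall_notMem.mp hdisj a) ⟨haU, ha⟩,
    not_not.mpr (subset_eStarCl U hxU)⟩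

lemma sInter_eStarRegular_subset_eStarClTheta (A : Set X) :
    ⋂₀ {V | EStarRegular V ∧ A ⊆ V} ⊆ eStarClTheta A := fun x hx => by_contra fun hxA => by
  obtain ⟨V, hV, hAV, hxV⟩ := exists_eStarRegular_of_notMem_eStarClTheta hxA
  exact hxV (hx V ⟨hV, hAV⟩)

theorem stmt9 (A : Set X) :
    eStarClTheta A = ⋂₀ {V | EStarThetaClosed V ∧ A ⊆ V} ∧
    eStarClTheta A = ⋂₀ {V | EStarRegular V ∧ A ⊆ V} := by
  have hθ : eStarClTheta A ⊆ ⋂₀ {V | EStarThetaClosed V ∧ A ⊆ V} :=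
    subset_sInter fun V hV => hV.1.eStarClTheta_subset hV.2
  have hreg : ⋂₀ {V | EStarThetaClosed V ∧ A ⊆ V} ⊆ ⋂₀ {V | EStarRegular V ∧ A ⊆ V} :=
    sInter_subset_sInter fun V hV => ⟨hV.1.eStarThetaClosed, hV.2⟩
  have hsep := sInter_eStarRegular_subset_eStarClTheta A
  exact ⟨hθ.antisymm (hreg.trans hsep), (hθ.trans hreg).antisymm hsep⟩
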